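/- The associated Legendre polynomials satisfy the three-term recurrence (ℓ - m + 1) P_{ℓ+1}^m(z) = (2ℓ+1) z P_ℓ^m(z) - (ℓ+m) P_{ℓ-1}^m(z) for all z ∈ [-1,1], ℓ ≥ 1 and 0 ≤ m ≤ ℓ-1. -/

import Mathlib

open Real

/-- The Legendre polynomial `P_ℓ(z) = 1/(2^ℓ ℓ!) dℓ/dzℓ [(z²-1)^ℓ]`. -/
noncomputable def legP (ℓ : ℕ) (z : ℝ) : ℝ :=
  (1 / (2 ^ ℓ * (Nat.factorial ℓ : ℝ))) *
    iteratedDeriv ℓ (fun y : ℝ => (y ^ 2 - 1) ^ ℓ) z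

/-- The associated Legendre polynomial
`P_ℓ^m(z) = (-1)^m (1-z²)^{m/2} dᵐ/dzᵐ P_ℓ(z)` for `0 ≤ m ≤ ℓ`. -/
noncomputable def assocLegP (ℓ m : ℕ) (z : ℝ) : ℝ :=
  (-1 : ℝ) ^ m * (Real.sqrt (1 - z ^ 2)) ^ m * iteratedDeriv m (legP ℓ) z

/-! With `u = X² - 1` and `v = u ^ (n + 1)`, differentiating `D v = 2 (n + 1) X u ^ n` and
`u * D v = 2 (n + 1) X v` with Leibniz' rule gives, for the Rodrigues polynomials
`P n = Dⁿ uⁿ / (2ⁿ n!)`, the two relations `D P (n+1) = X D P n + (n+1) P n` and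
`u D P n = (n+1) (P (n+1) - X P n)`. Eliminating the derivatives yields Bonnet's recurrence
`(n+2) P (n+2) = (2n+3) X P (n+1) - (n+1) P n` and `D P (n+2) = D P n + (2n+3) P (n+1)`.
Differentiating Bonnet's recurrence `m` times, the Leibniz term `m (2n+3) Dᵐ⁻¹ P (n+1)` is
rewritten by the second identity, which gives the recurrence for `Dᵐ P n`; multiplying by
`(-1)ᵐ (1 - z²)^(m/2)` is the claim. -/

open Polynomial

namespace Polynomial

section CommRing

variable {R : Type*} [CommRing R]

theorem derivative_X_sq_sub_one_pow_succ (n : ℕ) :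
    derivative (((X : R[X]) ^ 2 - 1) ^ (n + 1)) =
      2 * ((n : R[X]) + 1) * ((X ^ 2 - 1) ^ n * X) := by
  rw [derivative_pow, derivative_sub, derivative_X_pow, derivative_one, Nat.add_sub_cancel]
  simp only [C_eq_natCast]
  push_cast
  ring

theorem X_sq_sub_one_mul_iterate_derivative_pow_succ (n : ℕ) :
    (X ^ 2 - 1) * derivative^[n + 2] (((X : R[X]) ^ 2 - 1) ^ (n + 1)) =
      ((n : R[X]) + 1) * ((n : R[X]) + 2) * derivative^[n] ((X ^ 2 - 1) ^ (n + 1)) := by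
  set v : R[X] := (X ^ 2 - 1) ^ (n + 1)
  have hv : derivative v * X * X - derivative v = ((2 * (n + 1) : ℕ) : R[X]) * (v * X) := by
    simp only [v, derivative_X_sq_sub_one_pow_succ]
    push_cast
    ring
  have h := congrArg (derivative^[n + 1]) hv
  simp only [iterate_derivative_sub, iterate_derivative_natCast_mul] at h
  simp only [iterate_derivative_mul_X (derivative v * X), iterate_derivative_mul_X v,
    iterate_derivative_derivative_mul_X, ← Function.iterate_succ_apply, Nat.add_sub_cancel,
    nsmul_eq_mul, Nat.succ_eq_add_one] at h
  push_cast at h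
  linear_combination h

theorem iterate_derivative_succ_X_sq_sub_one_pow_succ (k n : ℕ) :
    derivative^[k + 1] (((X : R[X]) ^ 2 - 1) ^ (n + 1)) =
      2 * ((n : R[X]) + 1) *
        (derivative^[k] ((X ^ 2 - 1) ^ n) * X +
          (k : R[X]) * derivative^[k - 1] ((X ^ 2 - 1) ^ n)) := by
  rw [Function.iterate_succ_apply, derivative_X_sq_sub_one_pow_succ,
    show (2 * ((n : R[X]) + 1)) = ((2 * (n + 1) : ℕ) : R[X]) by push_cast; ring,
    iterate_derivative_natCast_mul, iterate_derivative_mul_X, nsmul_eq_mul]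

theorem iterate_derivative_X_sq_sub_one_pow_self_succ (n : ℕ) :
    derivative^[n + 1] (((X : R[X]) ^ 2 - 1) ^ (n + 1)) =
      2 * ((n : R[X]) + 1) * X * derivative^[n] ((X ^ 2 - 1) ^ n) +
        2 * (X ^ 2 - 1) * derivative^[n + 1] ((X ^ 2 - 1) ^ n) := by
  cases n with
  | zero => simpa using derivative_X_sq_sub_one_pow_succ (R := R) 0
  | succ n =>
    have h := iterate_derivative_succ_X_sq_sub_one_pow_succ (R := R) (n + 1) (n + 1)
    have h' := X_sq_sub_one_mul_iterate_derivative_pow_succ (R := R) n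
    push_cast at h h' ⊢
    linear_combination h - 2 * h'

end CommRing

section Field

variable (K : Type*) [Field K]

noncomputable def legendre (n : ℕ) : K[X] :=
  C ((2 ^ n * n.factorial : K)⁻¹) * derivative^[n] ((X ^ 2 - 1) ^ n)

variable {K} [CharZero K]

theorem iterate_derivative_X_sq_sub_one_pow (n : ℕ) :
    derivative^[n] (((X : K[X]) ^ 2 - 1) ^ n) =
      ((2 ^ n * n.factorial : ℕ) : K[X]) * legendre K n := by
  have h : (2 ^ n * n.factorial : K) ≠ 0 := by simp [Nat.factorial_ne_zero]
  rw [legendre, ← mul_assoc, ← map_natCast C, ← C_mul, Nat.cast_mul, Nat.cast_pow,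
    Nat.cast_ofNat, mul_inv_cancel₀ h, C_1, one_mul]

theorem X_sq_sub_one_mul_derivative_legendre (n : ℕ) :
    (X ^ 2 - 1) * derivative (legendre K n) =
      ((n : K[X]) + 1) * (legendre K (n + 1) - X * legendre K n) := by
  have h := iterate_derivative_X_sq_sub_one_pow_self_succ (R := K) n
  rw [iterate_derivative_X_sq_sub_one_pow, Function.iterate_succ_apply',
    iterate_derivative_X_sq_sub_one_pow, derivative_natCast_mul] at h
  have h0 : ((2 ^ (n + 1) * n.factorial : ℕ) : K[X]) ≠ 0 := by
    exact_mod_cast (by positivity : 2 ^ (n + 1) * n.factorial ≠ 0)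
  apply mul_left_cancel₀ h0
  rw [Nat.factorial_succ] at h
  push_cast at h ⊢
  linear_combination -h

theorem derivative_legendre_succ (n : ℕ) :
    derivative (legendre K (n + 1)) =
      X * derivative (legendre K n) + ((n : K[X]) + 1) * legendre K n := by
  have h := iterate_derivative_succ_X_sq_sub_one_pow_succ (R := K) (n + 1) n
  rw [Function.iterate_succ_apply', iterate_derivative_X_sq_sub_one_pow, Nat.add_sub_cancel,
    Function.iterate_succ_apply', iterate_derivative_X_sq_sub_one_pow] at h
  simp only [derivative_natCast_mul] at h
  have h0 : ((2 ^ (n + 1) * (n + 1).factorial : ℕ) : K[X]) ≠ 0 := by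
    exact_mod_cast (by positivity : 2 ^ (n + 1) * (n + 1).factorial ≠ 0)
  apply mul_left_cancel₀ h0
  rw [Nat.factorial_succ] at h ⊢
  push_cast at h ⊢
  linear_combination h

theorem legendre_add_two (n : ℕ) :
    ((n : K[X]) + 2) * legendre K (n + 2) =
      (2 * (n : K[X]) + 3) * X * legendre K (n + 1) - ((n : K[X]) + 1) * legendre K n := by
  have h₁ := X_sq_sub_one_mul_derivative_legendre (K := K) (n + 1)
  have h₀ := X_sq_sub_one_mul_derivative_legendre (K := K) n
  have hd := derivative_legendre_succ (K := K) n
  push_cast at h₁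
  linear_combination -h₁ + (X ^ 2 - 1) * hd + X * h₀

theorem derivative_legendre_add_two (n : ℕ) :
    derivative (legendre K (n + 2)) =
      derivative (legendre K n) + (2 * (n : K[X]) + 3) * legendre K (n + 1) := by
  have h₁ := derivative_legendre_succ (K := K) (n + 1)
  have h₀ := derivative_legendre_succ (K := K) n
  have hc := X_sq_sub_one_mul_derivative_legendre (K := K) n
  push_cast at h₁
  linear_combination h₁ + X * h₀ + hc

theorem iterate_derivative_legendre_add_two (n m : ℕ) :
    ((n : K[X]) + 2 - (m : K[X])) * derivative^[m] (legendre K (n + 2)) =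
      (2 * (n : K[X]) + 3) * X * derivative^[m] (legendre K (n + 1)) -
        ((n : K[X]) + 1 + (m : K[X])) * derivative^[m] (legendre K n) := by
  -- coefficients as casts of naturals, so that `iterate_derivative_natCast_mul` applies
  have hrec : ((n + 2 : ℕ) : K[X]) * legendre K (n + 2) =
      ((2 * n + 3 : ℕ) : K[X]) * (legendre K (n + 1) * X) -
        ((n + 1 : ℕ) : K[X]) * legendre K n := by
    push_cast
    linear_combination legendre_add_two (K := K) n
  have hder : derivative (legendre K (n + 2)) =
      derivative (legendre K n) + ((2 * n + 3 : ℕ) : K[X]) * legendre K (n + 1) := by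
    push_cast
    exact derivative_legendre_add_two n
  cases m with
  | zero => simpa using legendre_add_two (K := K) n
  | succ m =>
    have h₁ := congrArg (derivative^[m + 1]) hrec
    have h₂ := congrArg (derivative^[m]) hder
    simp only [iterate_derivative_sub, iterate_map_add, iterate_derivative_natCast_mul,
      iterate_derivative_mul_X, nsmul_eq_mul, Nat.add_sub_cancel, ← Function.iterate_succ_apply,
      Nat.succ_eq_add_one] at h₁ h₂
    push_cast at h₁ h₂ ⊢
    linear_combination h₁ - ((m : K[X]) + 1) * h₂

end Field

theorem iteratedDeriv_eval {𝕜 : Type*} [NontriviallyNormedField 𝕜] (p : 𝕜[X]) (n : ℕ) :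
    iteratedDeriv n (fun x => p.eval x) = fun x => (derivative^[n] p).eval x := by
  induction n with
  | zero => simp
  | succ n ih =>
    ext x
    rw [iteratedDeriv_succ, ih, Function.iterate_succ_apply', Polynomial.deriv]

end Polynomial

theorem legP_eq_eval_legendre (n : ℕ) : legP n = fun z => (legendre ℝ n).eval z := by
  have h : (fun y : ℝ => (y ^ 2 - 1) ^ n) = fun y => ((X ^ 2 - 1) ^ n : ℝ[X]).eval y := by
    simp
  ext z
  rw [legP, h, iteratedDeriv_eval, legendre, eval_mul, eval_C, one_div]

theorem iteratedDeriv_legP (n m : ℕ) (z : ℝ) :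
    iteratedDeriv m (legP n) z = (derivative^[m] (legendre ℝ n)).eval z := by
  rw [legP_eq_eval_legendre, iteratedDeriv_eval]

theorem assocLegP_recurrence_general (ℓ m : ℕ) (hℓ : 1 ≤ ℓ) :
    ∀ z ∈ Set.Icc (-1 : ℝ) 1,
      ((ℓ : ℝ) - m + 1) * assocLegP (ℓ + 1) m z =
        (2 * ℓ + 1) * z * assocLegP ℓ m z - ((ℓ : ℝ) + m) * assocLegP (ℓ - 1) m z := by
  obtain ⟨n, rfl⟩ : ∃ n, ℓ = n + 1 := ⟨ℓ - 1, by omega⟩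
  intro z _
  have h := congrArg (eval z) (iterate_derivative_legendre_add_two (K := ℝ) n m)
  simp only [eval_mul, eval_sub, eval_add, eval_natCast, eval_ofNat, eval_one, eval_X] at h
  simp only [assocLegP, iteratedDeriv_legP, Nat.add_sub_cancel]
  push_cast
  linear_combination (-1) ^ m * √(1 - z ^ 2) ^ m * h

/-- Three-term recurrence of the associated Legendre polynomials:
`(ℓ - m + 1) P_{ℓ+1}^m(z) = (2ℓ+1) z P_ℓ^m(z) - (ℓ+m) P_{ℓ-1}^m(z)`
for `z ∈ [-1,1]`, `ℓ ≥ 1`, `0 ≤ m ≤ ℓ-1`. -/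
theorem assocLegP_recurrence (ℓ m : ℕ) (hℓ : 1 ≤ ℓ) (hm : m ≤ ℓ - 1) :
    ∀ z ∈ Set.Icc (-1 : ℝ) 1,
      ((ℓ : ℝ) - m + 1) * assocLegP (ℓ + 1) m z =
        (2 * ℓ + 1) * z * assocLegP ℓ m z - ((ℓ : ℝ) + m) * assocLegP (ℓ - 1) m z :=
  assocLegP_recurrence_general ℓ m hℓ
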